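/- Suppose that for a finite set E of n points in ℝ², hinges of any nonzero type number at most H·n² and pairs with any fixed nonzero dot product number at most S·n^{4/3}. Then for every k ≥ 3 with k ≡ 0 (mod 3) and every k-tuple of nonzero reals (α₁,…,α_k), the number of k-chains of that type in E is at most H^{(k-3)/3}·S²·n^{2(k+1)/3}. -/

import Mathlib

/-!
Cut a chain of length `3m + 3` after its first three edges: the first two edges form a hinge,
the third edge is forgotten, and the rest is a chain of length `3m`. The forgotten edge is
determined by its endpoints, so each step costs a factor `H n²`. The remaining chain of length
`3` is determined by its first and last edges, two pairs with prescribed nonzero dot products,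
which gives `S² n^{8/3}`; in total `Hᵐ S² n^{2m + 8/3}`.
-/

/-- The standard dot product on ℝ². -/
def dot (A B : ℝ × ℝ) : ℝ := A.1 * B.1 + A.2 * B.2

/-- The set of k-chains of type τ in E: tuples of k+1 points of E whose consecutive
dot products are prescribed by τ. -/
def chains (E : Finset (ℝ × ℝ)) {k : ℕ} (τ : Fin k → ℝ) : Set (Fin (k + 1) → ℝ × ℝ) :=
  {R | (∀ i, R i ∈ E) ∧ ∀ j : Fin k, dot (R j.castSucc) (R j.succ) = τ j}

def dotPairs (E : Finset (ℝ × ℝ)) (a : ℝ) : Set ((ℝ × ℝ) × (ℝ × ℝ)) :=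
  {p | p.1 ∈ E ∧ p.2 ∈ E ∧ dot p.1 p.2 = a}

def hinges (E : Finset (ℝ × ℝ)) (a b : ℝ) : Set ((ℝ × ℝ) × (ℝ × ℝ) × (ℝ × ℝ)) :=
  {t | t.1 ∈ E ∧ t.2.1 ∈ E ∧ t.2.2 ∈ E ∧ dot t.1 t.2.1 = a ∧ dot t.2.1 t.2.2 = b}

section

variable (E : Finset (ℝ × ℝ))

theorem chains_finite {k : ℕ} (τ : Fin k → ℝ) : (chains E τ).Finite :=
  (Set.Finite.pi fun _ => E.finite_toSet).subset fun _ hR i _ => hR.1 i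

theorem dotPairs_finite (a : ℝ) : (dotPairs E a).Finite :=
  (E.finite_toSet.prod E.finite_toSet).subset fun _ hp => ⟨hp.1, hp.2.1⟩

theorem hinges_finite (a b : ℝ) : (hinges E a b).Finite :=
  (E.finite_toSet.prod (E.finite_toSet.prod E.finite_toSet)).subset
    fun _ ht => ⟨ht.1, ht.2.1, ht.2.2.1⟩

variable {E}

theorem tail_mem_chains {k : ℕ} {τ : Fin (k + 1) → ℝ} {R : Fin (k + 2) → ℝ × ℝ}
    (hR : R ∈ chains E τ) : Fin.tail R ∈ chains E (Fin.tail τ) :=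
  ⟨fun i => hR.1 i.succ, fun j => by
    simpa only [Fin.tail, Fin.succ_castSucc] using hR.2 j.succ⟩

theorem ncard_chains_three_le (τ : Fin 3 → ℝ) :
    (chains E τ).ncard ≤ (dotPairs E (τ 0)).ncard * (dotPairs E (τ 2)).ncard := by
  rw [← Set.ncard_prod]
  refine Set.ncard_le_ncard_of_injOn (fun R => ((R 0, R 1), (R 2, R 3))) ?_ ?_
    ((dotPairs_finite E _).prod (dotPairs_finite E _))
  · intro R hR
    exact ⟨⟨hR.1 0, hR.1 1, hR.2 0⟩, ⟨hR.1 2, hR.1 3, hR.2 2⟩⟩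
  · intro R _ R' _ h
    simp only [Prod.mk.injEq] at h
    funext i
    fin_cases i <;> simp [h]

theorem ncard_chains_add_three_le {k : ℕ} (τ : Fin (k + 3) → ℝ) :
    (chains E τ).ncard ≤
      (hinges E (τ 0) (τ 1)).ncard * (chains E (Fin.tail (Fin.tail (Fin.tail τ)))).ncard := by
  rw [← Set.ncard_prod]
  refine Set.ncard_le_ncard_of_injOn
    (fun R => ((R 0, R 1, R 2), Fin.tail (Fin.tail (Fin.tail R)))) ?_ ?_
    ((hinges_finite E _ _).prod (chains_finite E _))
  · intro R hR
    exact ⟨⟨hR.1 0, hR.1 1, hR.1 2, hR.2 0, hR.2 1⟩,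
      tail_mem_chains (tail_mem_chains (tail_mem_chains hR))⟩
  · intro R _ R' _ h
    simp only [Prod.mk.injEq] at h
    obtain ⟨⟨h0, h1, h2⟩, htail⟩ := h
    funext i
    refine Fin.cases h0 (fun i => Fin.cases h1 (fun i => Fin.cases h2 (fun i => ?_) i) i) i
    exact congrFun htail i

end

theorem ncard_chains_le_of_hinges_le {E : Finset (ℝ × ℝ)} {H S : ℝ}
    (hH : ∀ a b, a ≠ 0 → b ≠ 0 → ((hinges E a b).ncard : ℝ) ≤ H * (E.card : ℝ) ^ 2)
    (hS : ∀ a, a ≠ 0 → ((dotPairs E a).ncard : ℝ) ≤ S * (E.card : ℝ) ^ ((4 : ℝ) / 3))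
    (m : ℕ) (τ : Fin (3 * m + 3) → ℝ) (hτ : ∀ j, τ j ≠ 0) :
    ((chains E τ).ncard : ℝ) ≤ H ^ m * S ^ 2 * (E.card : ℝ) ^ (2 * (3 * m + 4 : ℝ) / 3) := by
  have hn : (0 : ℝ) ≤ E.card := Nat.cast_nonneg _
  induction m with
  | zero =>
    have hS0 := hS _ (hτ 0)
    calc ((chains E τ).ncard : ℝ)
        ≤ (dotPairs E (τ 0)).ncard * (dotPairs E (τ 2)).ncard := by
          exact_mod_cast ncard_chains_three_le τ
      _ ≤ (S * (E.card : ℝ) ^ ((4 : ℝ) / 3)) * (S * (E.card : ℝ) ^ ((4 : ℝ) / 3)) :=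
          mul_le_mul hS0 (hS _ (hτ 2)) (Nat.cast_nonneg _) ((Nat.cast_nonneg _).trans hS0)
      _ = H ^ 0 * S ^ 2 * (E.card : ℝ) ^ (2 * (3 * ((0 : ℕ) : ℝ) + 4) / 3) := by
          rw [show 2 * (3 * ((0 : ℕ) : ℝ) + 4) / 3 = 4 / 3 + 4 / 3 by norm_num,
            Real.rpow_add' hn (by norm_num)]
          ring
  | succ m ih =>
    have hH01 := hH _ _ (hτ 0) (hτ 1)
    calc ((chains E τ).ncard : ℝ)
        ≤ (hinges E (τ 0) (τ 1)).ncard * (chains E (Fin.tail (Fin.tail (Fin.tail τ)))).ncard := by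
          exact_mod_cast ncard_chains_add_three_le (k := 3 * m + 3) τ
      _ ≤ (H * (E.card : ℝ) ^ 2) *
            (H ^ m * S ^ 2 * (E.card : ℝ) ^ (2 * (3 * m + 4 : ℝ) / 3)) :=
          mul_le_mul hH01 (ih _ fun j => hτ _) (Nat.cast_nonneg _) ((Nat.cast_nonneg _).trans hH01)
      _ = H ^ (m + 1) * S ^ 2 * (E.card : ℝ) ^ (2 * (3 * ((m + 1 : ℕ) : ℝ) + 4) / 3) := by
          rw [show 2 * (3 * ((m + 1 : ℕ) : ℝ) + 4) / 3 = (2 : ℕ) + 2 * (3 * m + 4) / 3 by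
              push_cast; ring,
            Real.rpow_add' hn (by positivity), Real.rpow_natCast]
          ring

theorem chains_bound_zero_mod_three (E : Finset (ℝ × ℝ)) (H S : ℝ)
    (hH : ∀ α₁ α₂ : ℝ, α₁ ≠ 0 → α₂ ≠ 0 →
      ({t : (ℝ × ℝ) × (ℝ × ℝ) × (ℝ × ℝ) | t.1 ∈ E ∧ t.2.1 ∈ E ∧ t.2.2 ∈ E ∧
        dot t.1 t.2.1 = α₁ ∧ dot t.2.1 t.2.2 = α₂}.ncard : ℝ) ≤ H * (E.card : ℝ) ^ 2)
    (hS : ∀ α : ℝ, α ≠ 0 →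
      ({p : (ℝ × ℝ) × (ℝ × ℝ) | p.1 ∈ E ∧ p.2 ∈ E ∧ dot p.1 p.2 = α}.ncard : ℝ) ≤
        S * (E.card : ℝ) ^ ((4:ℝ)/3))
    (k : ℕ) (hk : 3 ≤ k) (hk3 : k % 3 = 0) (α : Fin k → ℝ) (hα : ∀ j, α j ≠ 0) :
    ((chains E α).ncard : ℝ) ≤ H ^ ((k - 3) / 3) * S ^ 2 * (E.card : ℝ) ^ ((2 * (k + 1) : ℝ) / 3) := by
  obtain ⟨m, rfl⟩ : ∃ m, k = 3 * m + 3 := ⟨k / 3 - 1, by omega⟩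
  have hm : (3 * m + 3 - 3) / 3 = m := by omega
  have hexp : (2 * ((3 * m + 3 : ℕ) + 1) : ℝ) / 3 = 2 * (3 * m + 4 : ℝ) / 3 := by push_cast; ring
  rw [hm, hexp]
  exact ncard_chains_le_of_hinges_le hH hS m α hα
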